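/- Let X ⊂ ℝ^d be a finite set of n points, C ⊂ ℝ^d a finite set, ε > 0, and let σ : X → ℝ^d be a map satisfying ‖x − σ(x)‖ ≤ ε·d(x,C) for every x ∈ X, where d(x,C) := min_{c∈C} ‖x − c‖. Let X' denote the multiset {σ(x) : x ∈ X} (with multiplicities). Then for every finite set C' ⊂ ℝ^d and every p ∈ {1,…,n}: |cost_p(X',C') − cost_p(X,C')| ≤ ε·cost_p(X,C). -/

import Mathlib

/-- `topP p s` is the sum of the `p` largest entries of the multiset `s` of reals. -/
noncomputable def topP (p : ℕ) (s : Multiset ℝ) : ℝ :=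
  (((s.sort (· ≤ ·)).reverse).take p).sum

/-- The p-Centrum objective: the sum of the `p` largest distances from the points
of the multiset `s` (with multiplicity) to the nearest center in `C`. -/
noncomputable def costP (d : ℕ) (p : ℕ) (s : Multiset (EuclideanSpace ℝ (Fin d)))
    (C : Finset (EuclideanSpace ℝ (Fin d))) : ℝ :=
  topP p (s.map fun x => Metric.infDist x (C : Set (EuclideanSpace ℝ (Fin d))))

/-!
`topP p s` is the largest sum of a sub-multiset of `s` of size `p`, attained by the `p` largest
entries. Take such a maximizing sub-multiset for the perturbed distances `d(σ x, C')`: on it each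
term differs from `d(x, C')` by at most `‖x - σ x‖ ≤ ε d(x, C)`, and the sums of `d(x, C')` and of
`d(x, C)` over it are bounded by the respective maxima. Exchanging the roles of `σ x` and `x`
gives the other direction.
-/

theorem Multiset.exists_le_map_eq {α β : Type*} {f : α → β} {s : Multiset α} {t : Multiset β}
    (h : t ≤ s.map f) : ∃ u ≤ s, u.map f = t := by
  induction s using Quotient.inductionOn
  induction t using Quotient.inductionOn
  obtain ⟨l, hperm, hsub⟩ := Multiset.coe_le.mp h
  obtain ⟨l', hl', rfl⟩ := List.sublist_map_iff.mp hsub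
  exact ⟨l', Multiset.coe_le.mpr hl'.subperm, Multiset.coe_eq_coe.mpr hperm⟩

theorem List.Pairwise.sum_le_sum_take {L : List ℝ} (hL : L.Pairwise (· ≥ ·)) {t : Multiset ℝ}
    (ht : t ≤ L) : t.sum ≤ (L.take (Multiset.card t)).sum := by
  induction L generalizing t with
  | nil => simp [Multiset.le_zero.mp ht]
  | cons m L ih =>
    obtain ⟨hm, hL⟩ := List.pairwise_cons.mp hL
    rcases Multiset.empty_or_exists_mem t with rfl | ⟨b, hb⟩
    · simp
    obtain ⟨a, ha, ham, hle⟩ : ∃ a ∈ t, a ≤ m ∧ t.erase a ≤ L := by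
      by_cases hmt : m ∈ t
      · refine ⟨m, hmt, le_rfl, ?_⟩
        simpa using Multiset.erase_le_erase m ht
      · have htL : t ≤ L := (Multiset.le_cons_of_notMem hmt).mp (by simpa using ht)
        exact ⟨b, hb, hm b (Multiset.mem_of_le htL hb), (Multiset.erase_le b t).trans htL⟩
    rw [← Multiset.sum_erase ha, ← Multiset.card_erase_add_one ha, List.take_succ_cons,
      List.sum_cons]
    exact add_le_add ham (ih hL hle)

theorem sum_le_topP {t s : Multiset ℝ} (h : t ≤ s) : t.sum ≤ topP (Multiset.card t) s := by
  have hs : ((s.sort (· ≤ ·)).reverse : Multiset ℝ) = s := by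
    rw [Multiset.coe_reverse, Multiset.sort_eq]
  exact List.Pairwise.sum_le_sum_take (List.pairwise_reverse.mpr (Multiset.pairwise_sort _ _))
    (h.trans_eq hs.symm)

theorem exists_le_card_eq_sum_eq_topP {s : Multiset ℝ} {p : ℕ} (hp : p ≤ Multiset.card s) :
    ∃ t ≤ s, Multiset.card t = p ∧ t.sum = topP p s := by
  refine ⟨((s.sort (· ≤ ·)).reverse.take p : List ℝ), ?_, ?_, rfl⟩
  · calc ((s.sort (· ≤ ·)).reverse.take p : Multiset ℝ)
        ≤ ((s.sort (· ≤ ·)).reverse : Multiset ℝ) :=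
          Multiset.coe_le.mpr (List.take_sublist _ _).subperm
      _ = s := by rw [Multiset.coe_reverse, Multiset.sort_eq]
  · rw [Multiset.coe_card, List.length_take, List.length_reverse, Multiset.length_sort]
    exact min_eq_left hp

theorem topP_map_le_add {α : Type*} {s : Multiset α} {p : ℕ} (hp : p ≤ Multiset.card s)
    {a b g : α → ℝ} {ε : ℝ} (hε : 0 ≤ ε) (hab : ∀ x ∈ s, a x ≤ b x + ε * g x) :
    topP p (s.map a) ≤ topP p (s.map b) + ε * topP p (s.map g) := by
  obtain ⟨t, hts, htp, hsum⟩ := exists_le_card_eq_sum_eq_topP (s := s.map a) (by simpa using hp)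
  obtain ⟨u, hus, rfl⟩ := Multiset.exists_le_map_eq hts
  rw [Multiset.card_map] at htp
  have hb := sum_le_topP (Multiset.map_le_map (f := b) hus)
  have hg := sum_le_topP (Multiset.map_le_map (f := g) hus)
  rw [Multiset.card_map, htp] at hb hg
  calc topP p (s.map a) = (u.map a).sum := hsum.symm
    _ ≤ (u.map fun x => b x + ε * g x).sum :=
        Multiset.sum_map_le_sum_map _ _ fun x hx => hab x (Multiset.mem_of_le hus hx)
    _ = (u.map b).sum + ε * (u.map g).sum := by
        rw [Multiset.sum_map_add, Multiset.sum_map_mul_left]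
    _ ≤ topP p (s.map b) + ε * topP p (s.map g) := by gcongr

theorem abs_topP_map_sub_le {α : Type*} {s : Multiset α} {p : ℕ} (hp : p ≤ Multiset.card s)
    {a b g : α → ℝ} {ε : ℝ} (hε : 0 ≤ ε) (hab : ∀ x ∈ s, |a x - b x| ≤ ε * g x) :
    |topP p (s.map a) - topP p (s.map b)| ≤ ε * topP p (s.map g) := by
  have h₁ := topP_map_le_add (a := a) (b := b) (g := g) hp hε fun x hx =>
    sub_le_iff_le_add'.mp (abs_sub_le_iff.mp (hab x hx)).1
  have h₂ := topP_map_le_add (a := b) (b := a) (g := g) hp hε fun x hx =>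
    sub_le_iff_le_add'.mp (abs_sub_le_iff.mp (hab x hx)).2
  rw [abs_sub_le_iff]
  constructor <;> linarith

theorem stmt_7_general {d : ℕ} (X : Finset (EuclideanSpace ℝ (Fin d)))
    (C : Finset (EuclideanSpace ℝ (Fin d)))
    (ε : ℝ) (hε : 0 < ε)
    (σ : EuclideanSpace ℝ (Fin d) → EuclideanSpace ℝ (Fin d))
    (hσ : ∀ x ∈ X, ‖x - σ x‖ ≤ ε * Metric.infDist x (C : Set (EuclideanSpace ℝ (Fin d)))) :
    ∀ C' : Finset (EuclideanSpace ℝ (Fin d)), C'.Nonempty →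
      ∀ p : ℕ, 1 ≤ p → p ≤ X.card →
        |costP d p (X.val.map σ) C' - costP d p X.val C'| ≤ ε * costP d p X.val C := by
  intro C' _ p _ hp
  rw [costP, costP, costP, Multiset.map_map]
  refine abs_topP_map_sub_le hp hε.le fun x hx => ?_
  have hLip := (Metric.lipschitz_infDist_pt (C' : Set (EuclideanSpace ℝ (Fin d)))).dist_le_mul
    (σ x) x
  rw [Real.dist_eq, NNReal.coe_one, one_mul, dist_eq_norm'] at hLip
  exact hLip.trans (hσ x hx)

theorem stmt_7 {d : ℕ} (X : Finset (EuclideanSpace ℝ (Fin d)))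
    (C : Finset (EuclideanSpace ℝ (Fin d))) (hC : C.Nonempty)
    (ε : ℝ) (hε : 0 < ε)
    (σ : EuclideanSpace ℝ (Fin d) → EuclideanSpace ℝ (Fin d))
    (hσ : ∀ x ∈ X, ‖x - σ x‖ ≤ ε * Metric.infDist x (C : Set (EuclideanSpace ℝ (Fin d)))) :
    ∀ C' : Finset (EuclideanSpace ℝ (Fin d)), C'.Nonempty →
      ∀ p : ℕ, 1 ≤ p → p ≤ X.card →
        |costP d p (X.val.map σ) C' - costP d p X.val C'| ≤ ε * costP d p X.val C :=
  stmt_7_general X C ε hε σ hσ
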